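/- arXiv:0805.4563 — 4 statements merged into one kernel-verified Lean document; each statement's English description precedes it below -/
import Mathlib

section
/- Let G be a finite group, H ≤ G, and V a complex irreducible representation of G with dim V^H = 1. Let V appear in the permutation representation of G on G/H. Then f_{H,V} C[G] f_{H,V} is a one-dimensional complex vector space, where f_{H,V} = p_H e_V with e_V the central idempotent of C[G] corresponding to V. -/
/-!
Write `ψ : ℂ[G] → End V` for the action of the group algebra and `f = p_H e_V`.
The operator `ψ e_V` commutes with `ρ` because characters are class functions, so it is a scalar
by Schur's lemma, and orthonormality of characters gives its trace `dim V`; hence `ψ e_V = 1`.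
Moreover `b e_V = (dim V / |G|) ∑_g tr(ρ(g⁻¹) ψ(b)) g` depends only on `ψ b`.
The operator `π = ψ p_H` is the projection onto `V^H`, which has rank one, so `ψ(f a f) = π ψ(a) π`
is a multiple of `π = ψ(f f) ≠ 0`; as right multiplication by `e_V` factors through `ψ`,
the element `f a f = (p_H e_V a p_H) e_V` is the same multiple of `f f`.
-/

open Module

theorem LinearMap.exists_mul_mul_eq_smul_of_finrank_range_eq_one {k V : Type*} [Field k]
    [AddCommGroup V] [Module k V] {π : Module.End k V} (hπ : finrank k (range π) = 1)
    (B : Module.End k V) : ∃ s : k, π * B * π = s • π := by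
  obtain ⟨v, -, hv⟩ := finrank_eq_one_iff'.mp hπ
  obtain ⟨s, hs⟩ := hv ⟨π (B v), mem_range_self _ _⟩
  refine ⟨s, LinearMap.ext fun x ↦ ?_⟩
  obtain ⟨t, ht⟩ := hv ⟨π x, mem_range_self _ _⟩
  have hs : π (B v) = s • (v : V) := (congrArg Subtype.val hs).symm
  have ht : π x = t • (v : V) := (congrArg Subtype.val ht).symm
  simp only [Module.End.mul_apply, smul_apply, ht, map_smul, hs, smul_comm t s]

theorem finrank_span_mul_mul_eq_one {k A B : Type*} [Field k] [Ring A] [Algebra k A] [Ring B]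
    [Algebra k B] (ψ : A →ₐ[k] B) {p e : A} (he : ψ e = 1) (hker : ∀ b, ψ b = 0 → b * e = 0)
    (hp : IsIdempotentElem (ψ p)) (hp₀ : ψ p ≠ 0)
    (hcorner : ∀ y, ∃ s : k, ψ p * y * ψ p = s • ψ p) :
    finrank k (Submodule.span k {x | ∃ a, x = p * e * a * (p * e)}) = 1 := by
  have hψ : ψ (p * e * (p * e)) = ψ p := by simp [he, hp.eq]
  have hmem : ∀ a, ∃ s : k, p * e * a * (p * e) = s • (p * e * (p * e)) := by
    intro a
    obtain ⟨s, hs⟩ := hcorner (ψ a)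
    have hzero : (p * e * a * p - s • (p * e * p)) * e = 0 :=
      hker _ (by simp [he, hs, hp.eq])
    refine ⟨s, ?_⟩
    rw [sub_mul, sub_eq_zero] at hzero
    simpa only [mul_assoc, smul_mul_assoc] using hzero
  have hspan : Submodule.span k {x | ∃ a, x = p * e * a * (p * e)} = k ∙ (p * e * (p * e)) := by
    refine le_antisymm (Submodule.span_le.2 ?_) ((Submodule.span_singleton_le_iff_mem _ _).2 ?_)
    · rintro _ ⟨a, rfl⟩
      obtain ⟨s, hs⟩ := hmem a
      exact hs ▸ Submodule.smul_mem _ s (Submodule.mem_span_singleton_self _)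
    · exact Submodule.subset_span ⟨1, by rw [mul_one]⟩
  rw [hspan, finrank_span_singleton]
  rintro h
  exact hp₀ (hψ ▸ h ▸ map_zero ψ)

namespace Representation

section Monoid

variable {k G V : Type*} [Field k] [Monoid G] [AddCommGroup V] [Module k V]
  (ρ : Representation k G V)

theorem isIrreducible_of_forall_submodule [Nontrivial V]
    (hirr : ∀ U : Submodule k V, (∀ g : G, ∀ x ∈ U, ρ g x ∈ U) → U = ⊥ ∨ U = ⊤) :
    ρ.IsIrreducible where
  exists_pair_ne := ⟨⊥, ⊤, fun h ↦ bot_ne_top (congrArg Subrepresentation.toSubmodule h)⟩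
  eq_bot_or_eq_top U := by
    rcases hirr U.toSubmodule fun g _ hx ↦ U.apply_mem_toSubmodule g hx with h | h
    · exact .inl (Subrepresentation.toSubmodule_injective h)
    · exact .inr (Subrepresentation.toSubmodule_injective h)

theorem exists_eq_smul_one_of_commute [IsAlgClosed k] [FiniteDimensional k V] [ρ.IsIrreducible]
    (T : Module.End k V) (hT : ∀ g, Commute (ρ g) T) : ∃ c : k, T = c • 1 := by
  let f : IntertwiningMap ρ ρ :=
    T.intertwiningMap_of_isIntertwiningMap ρ ρ fun g v ↦ (LinearMap.congr_fun (hT g) v).symm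
  obtain ⟨c, hc⟩ := IsIrreducible.algebraMap_intertwiningMap_bijective_of_isAlgClosed.2 f
  exact ⟨c, by ext v; exact (congrArg (· v) hc).symm⟩

end Monoid

variable {k G V : Type*} [Field k] [Group G] [AddCommGroup V] [Module k V]
  (ρ : Representation k G V)

theorem isProj_asAlgebraHom_subgroup_average (H : Subgroup G) [Fintype H]
    [Invertible (Fintype.card H : k)] :
    LinearMap.IsProj (⨅ h : H, LinearMap.eqLocus (ρ h) LinearMap.id)
      (asAlgebraHom ρ ((Fintype.card H : k)⁻¹ • ∑ h : H, MonoidAlgebra.of k G h)) := by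
  have hinv : invariants (ρ.comp H.subtype) = ⨅ h : H, LinearMap.eqLocus (ρ h) LinearMap.id := by
    ext v
    simp [mem_invariants, Submodule.mem_iInf]
  have havg : asAlgebraHom ρ ((Fintype.card H : k)⁻¹ • ∑ h : H, MonoidAlgebra.of k G h)
      = averageMap (ρ.comp H.subtype) := by
    simp [averageMap, GroupAlgebra.average, map_sum, invOf_eq_inv]
  exact hinv ▸ havg ▸ isProj_averageMap _

variable [Fintype G]

noncomputable def charIdempotent : MonoidAlgebra k G :=
  ((finrank k V : k) / (Fintype.card G : k)) • ∑ g : G, ρ.character g⁻¹ • MonoidAlgebra.of k G g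

theorem mul_sum_character_inv_smul_of (b : MonoidAlgebra k G) :
    b * ∑ g : G, ρ.character g⁻¹ • MonoidAlgebra.of k G g
      = ∑ g : G, LinearMap.trace k V (ρ g⁻¹ * asAlgebraHom ρ b) • MonoidAlgebra.of k G g := by
  induction b using MonoidAlgebra.induction_linear with
  | zero => simp
  | add a b ha hb =>
    simp only [add_mul, ha, hb, map_add, mul_add, add_smul, Finset.sum_add_distrib]
  | single x r =>
    rw [Finset.mul_sum]
    refine Fintype.sum_equiv (Equiv.mulLeft x) _ _ fun g ↦ ?_
    simp [MonoidAlgebra.single_mul_single, ← mul_assoc, ← map_mul, character, mul_comm]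

theorem mul_charIdempotent_eq_zero {b : MonoidAlgebra k G} (hb : asAlgebraHom ρ b = 0) :
    b * ρ.charIdempotent = 0 := by
  rw [charIdempotent, mul_smul_comm, mul_sum_character_inv_smul_of, hb]
  simp

theorem commute_asAlgebraHom_charIdempotent (h : G) :
    Commute (ρ h) (asAlgebraHom ρ ρ.charIdempotent) := by
  simp only [charIdempotent, map_smul, map_sum, MonoidAlgebra.of_apply, asAlgebraHom_single_one]
  refine Commute.smul_right ?_ _
  rw [Commute, SemiconjBy, Finset.mul_sum, Finset.sum_mul]
  refine Fintype.sum_equiv (MulAut.conj h).toEquiv _ _ fun g ↦ ?_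
  simp only [MulEquiv.toEquiv_eq_coe, MulEquiv.coe_toEquiv, MulAut.conj_apply, mul_inv_rev,
    inv_inv, smul_mul_assoc, mul_smul_comm, ← map_mul, inv_mul_cancel_right, ← mul_assoc,
    char_conj]

theorem trace_asAlgebraHom_charIdempotent [CharZero k] [IsAlgClosed k] [FiniteDimensional k V]
    [ρ.IsIrreducible] :
    LinearMap.trace k V (asAlgebraHom ρ ρ.charIdempotent) = finrank k V := by
  have : Invertible (Nat.card G : k) := invertibleOfNonzero (Nat.cast_ne_zero.2 Nat.card_pos.ne')
  have horth := char_orthonormal ρ ρ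
  rw [if_pos ⟨Equiv.refl ρ⟩] at horth
  simp only [Nat.card_eq_fintype_card, character, charIdempotent, MonoidAlgebra.of_apply,
    MonoidAlgebra.smul_single, smul_eq_mul, mul_one, map_smul, map_sum, asAlgebraHom_single]
    at horth ⊢
  simp only [mul_comm (LinearMap.trace k V (ρ _⁻¹))]
  linear_combination (finrank k V : k) * horth

theorem asAlgebraHom_charIdempotent [CharZero k] [IsAlgClosed k] [FiniteDimensional k V]
    [ρ.IsIrreducible] : asAlgebraHom ρ ρ.charIdempotent = 1 := by
  have : Nontrivial V := IsSimpleModule.nontrivial (MonoidAlgebra k G) ρ.asModule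
  obtain ⟨c, hc⟩ := ρ.exists_eq_smul_one_of_commute _ ρ.commute_asAlgebraHom_charIdempotent
  have htrace := ρ.trace_asAlgebraHom_charIdempotent
  have hd : (finrank k V : k) ≠ 0 := Nat.cast_ne_zero.2 finrank_pos.ne'
  rw [hc, map_smul, LinearMap.trace_one, smul_eq_mul, mul_eq_right₀ hd] at htrace
  rw [hc, htrace, one_smul]

end Representation

/-- For a complex irreducible representation `V` of `G` and `H ≤ G` with `dim V^H = 1`
(so that `V` appears in the permutation representation on `G/H`), the space
`f_{H,V} ℂ[G] f_{H,V}` is one-dimensional, where `f_{H,V} = p_H e_V` with `e_V` the central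
idempotent of `ℂ[G]` corresponding to `V`. -/
theorem stmt_8 (G : Type) [Group G] [Fintype G] (H : Subgroup G) [DecidablePred (· ∈ H)]
    (V : Type) [AddCommGroup V] [Module ℂ V] [FiniteDimensional ℂ V]
    (ρ : Representation ℂ G V)
    (hirr : ∀ U : Submodule ℂ V, (∀ g : G, ∀ x ∈ U, ρ g x ∈ U) → U = ⊥ ∨ U = ⊤)
    (hV : Nontrivial V)
    (hfix : Module.finrank ℂ
      ↥(⨅ h : H, LinearMap.eqLocus (ρ (h : G)) (LinearMap.id : V →ₗ[ℂ] V)) = 1)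
    (p : MonoidAlgebra ℂ G)
    (hp : p = (Fintype.card H : ℂ)⁻¹ • ∑ h : H, MonoidAlgebra.of ℂ G (h : G))
    (eV : MonoidAlgebra ℂ G)
    (heV : eV = ((Module.finrank ℂ V : ℂ) / (Fintype.card G : ℂ)) •
      ∑ g : G, (LinearMap.trace ℂ V (ρ g⁻¹)) • MonoidAlgebra.of ℂ G g) :
    Module.finrank ℂ
      ↥(Submodule.span ℂ
        {x : MonoidAlgebra ℂ G | ∃ a : MonoidAlgebra ℂ G, x = (p * eV) * a * (p * eV)}) = 1 := by
  have : ρ.IsIrreducible := ρ.isIrreducible_of_forall_submodule hirr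
  have : Invertible (Fintype.card H : ℂ) :=
    invertibleOfNonzero (Nat.cast_ne_zero.2 Fintype.card_ne_zero)
  have hproj := hp ▸ ρ.isProj_asAlgebraHom_subgroup_average H
  have hrank : finrank ℂ (LinearMap.range (Representation.asAlgebraHom ρ p)) = 1 :=
    hproj.range ▸ hfix
  obtain rfl : eV = ρ.charIdempotent := heV
  refine finrank_span_mul_mul_eq_one _ ρ.asAlgebraHom_charIdempotent
    (fun _ ↦ ρ.mul_charIdempotent_eq_zero) hproj.isIdempotentElem ?_
    (LinearMap.exists_mul_mul_eq_smul_of_finrank_range_eq_one hrank)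
  intro h
  rw [h, LinearMap.range_zero, finrank_bot] at hrank
  exact zero_ne_one hrank
end

section
/- Let G be a finite group and H ≤ G. There exists a common system of representatives {g_{ij} : 1 ≤ i ≤ d, 1 ≤ j ≤ n_i} for the left cosets and the right cosets of H in G, compatible with the double coset decomposition: G = ⊔_i H g_{i1} H and H g_{i1} H = ⊔_j g_{ij} H = ⊔_j H g_{ij}. -/
/-!
Left cosets and right cosets of `H` both partition each double coset `HgH` into blocks of size
`|H|`, so a double coset contains as many left cosets as right cosets, and we can pair them off
bijectively inside each double coset. A left coset `xH` and a right coset `Hy` in the same double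
coset always meet (if `y = h x k` then `xk = h⁻¹y` lies in both), so choosing one point in each
paired intersection gives a common system of representatives. The double coset decomposition is
then automatic, because the representative of a coset lies in the double coset containing it.
-/

namespace Setoid

variable {X : Type*} [Finite X]

theorem card_fiber_map_of_le_mul {r s : Setoid X} (h : r ≤ s) {k : ℕ}
    (hk : ∀ x, Nat.card {y // r y x} = k) (q : Quotient s) :
    Nat.card {c : Quotient r // map_of_le h c = q} * k =
      Nat.card {x // Quotient.mk s x = q} := by
  have : Fintype {c : Quotient r // map_of_le h c = q} := Fintype.ofFinite _
  have hfiber (c : Quotient r) : Nat.card {x // Quotient.mk r x = c} = k := by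
    induction c using Quotient.inductionOn with
    | h x => exact (Nat.card_congr (Equiv.subtypeEquivRight fun _ => Quotient.eq)).trans (hk x)
  rw [← Nat.card_congr (Equiv.sigmaSubtypeFiberEquivSubtype (Quotient.mk r)
    (p := fun x => Quotient.mk s x = q) (q := fun c => map_of_le h c = q) fun _ => Iff.rfl),
    Nat.card_sigma]
  simp only [hfiber, Finset.sum_const, Finset.card_univ, smul_eq_mul, Nat.card_eq_fintype_card]

theorem exists_equiv_map_of_le_eq {r₁ r₂ s : Setoid X} (h₁ : r₁ ≤ s) (h₂ : r₂ ≤ s)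
    {k : ℕ} (hk₁ : ∀ x, Nat.card {y // r₁ y x} = k) (hk₂ : ∀ x, Nat.card {y // r₂ y x} = k) :
    ∃ e : Quotient r₁ ≃ Quotient r₂, ∀ c, map_of_le h₂ (e c) = map_of_le h₁ c := by
  have hcard (q : Quotient s) :
      Nat.card {c // map_of_le h₁ c = q} = Nat.card {c // map_of_le h₂ c = q} := by
    have hk : 0 < k := by
      rw [← hk₁ q.out]
      have : Nonempty {y // r₁ y q.out} := ⟨⟨q.out, r₁.refl _⟩⟩
      exact Nat.card_pos
    exact Nat.eq_of_mul_eq_mul_right hk <| (card_fiber_map_of_le_mul h₁ hk₁ q).trans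
      (card_fiber_map_of_le_mul h₂ hk₂ q).symm
  exact ⟨Equiv.ofFiberEquiv fun q => (Finite.card_eq.mp (hcard q)).some,
    Equiv.ofFiberEquiv_map _⟩

theorem exists_common_transversal {r₁ r₂ s : Setoid X} (h₁ : r₁ ≤ s) (h₂ : r₂ ≤ s)
    {k : ℕ} (hk₁ : ∀ x, Nat.card {y // r₁ y x} = k) (hk₂ : ∀ x, Nat.card {y // r₂ y x} = k)
    (hmeet : ∀ x y, s x y → ∃ z, r₁ x z ∧ r₂ y z) :
    ∃ S : Finset X, (∀ x, ∃! t, t ∈ S ∧ r₁ t x) ∧ (∀ x, ∃! t, t ∈ S ∧ r₂ t x) := by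
  obtain ⟨e, he⟩ := exists_equiv_map_of_le_eq h₁ h₂ hk₁ hk₂
  have hrep (c : Quotient r₁) : ∃ z, Quotient.mk r₁ z = c ∧ Quotient.mk r₂ z = e c := by
    induction c using Quotient.inductionOn with
    | h x =>
      obtain ⟨y, hy⟩ := Quotient.exists_rep (e ⟦x⟧)
      have hxy : s x y := Quotient.exact (hy ▸ he ⟦x⟧ : map_of_le h₂ ⟦y⟧ = map_of_le h₁ ⟦x⟧).symm
      obtain ⟨z, hxz, hyz⟩ := hmeet x y hxy
      exact ⟨z, (Quotient.sound hxz).symm, hy ▸ (Quotient.sound hyz).symm⟩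
  choose f hf₁ hf₂ using hrep
  refine ⟨(Set.toFinite (Set.range f)).toFinset, fun x => ?_, fun x => ?_⟩
  · refine ⟨f ⟦x⟧, ⟨by simp, Quotient.exact (hf₁ _)⟩, ?_⟩
    rintro _ ⟨ht, htx⟩
    obtain ⟨c, rfl⟩ : _ ∈ Set.range f := by simpa using ht
    rw [← hf₁ c, Quotient.sound htx]
  · refine ⟨f (e.symm ⟦x⟧), ⟨by simp, Quotient.exact (by simp [hf₂])⟩, ?_⟩
    rintro _ ⟨ht, htx⟩
    obtain ⟨c, rfl⟩ : _ ∈ Set.range f := by simpa using ht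
    rw [← Quotient.sound htx, hf₂, Equiv.symm_apply_apply]

end Setoid

open QuotientGroup

namespace DoubleCoset

variable {G : Type*} [Group G]

theorem leftRel_le_setoid (H K : Subgroup G) : leftRel K ≤ setoid (H : Set G) K := by
  intro x y hxy
  rw [leftRel_apply] at hxy
  exact rel_iff.mpr ⟨1, H.one_mem, x⁻¹ * y, hxy, by group⟩

theorem rightRel_le_setoid (H K : Subgroup G) : rightRel H ≤ setoid (H : Set G) K := by
  intro x y hxy
  rw [rightRel_apply] at hxy
  exact rel_iff.mpr ⟨y * x⁻¹, hxy, 1, K.one_mem, by group⟩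

theorem exists_leftRel_rightRel_of_setoid {H K : Subgroup G} {x y : G}
    (hxy : setoid (H : Set G) K x y) : ∃ z, leftRel K x z ∧ rightRel H y z := by
  obtain ⟨a, ha, b, hb, rfl⟩ := rel_iff.mp hxy
  refine ⟨x * b, ?_, ?_⟩
  · rw [leftRel_apply]
    simpa using hb
  · rw [rightRel_apply]
    simpa [mul_assoc] using H.inv_mem ha

theorem doubleCoset_eq_biUnion_leftCoset {H K : Subgroup G} {S : Set G}
    (hS : ∀ x, ∃ t ∈ S, t⁻¹ * x ∈ K) (a : G) :
    doubleCoset a H K = ⋃ t ∈ {t | t ∈ S ∧ t ∈ doubleCoset a H K}, (fun k => t * k) '' K := by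
  ext x
  simp only [Set.mem_iUnion, Set.mem_image, Set.mem_ofPred_eq, exists_prop]
  constructor
  · intro hx
    obtain ⟨t, htS, htx⟩ := hS x
    obtain ⟨h, hh, k, hk, rfl⟩ := mem_doubleCoset.mp hx
    refine ⟨t, ⟨htS, mem_doubleCoset.mpr ⟨h, hh, k * (t⁻¹ * (h * a * k))⁻¹, ?_, ?_⟩⟩, _, htx, ?_⟩
    · exact K.mul_mem hk (K.inv_mem htx)
    · group
    · group
  · rintro ⟨t, ⟨-, ht⟩, k, hk, rfl⟩
    obtain ⟨h, hh, k', hk', rfl⟩ := mem_doubleCoset.mp ht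
    exact mem_doubleCoset.mpr ⟨h, hh, k' * k, K.mul_mem hk' hk, by group⟩

theorem doubleCoset_eq_biUnion_rightCoset {H K : Subgroup G} {S : Set G}
    (hS : ∀ x, ∃ t ∈ S, x * t⁻¹ ∈ H) (a : G) :
    doubleCoset a H K = ⋃ t ∈ {t | t ∈ S ∧ t ∈ doubleCoset a H K}, (fun h => h * t) '' H := by
  ext x
  simp only [Set.mem_iUnion, Set.mem_image, Set.mem_ofPred_eq, exists_prop]
  constructor
  · intro hx
    obtain ⟨t, htS, htx⟩ := hS x
    obtain ⟨h, hh, k, hk, rfl⟩ := mem_doubleCoset.mp hx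
    refine ⟨t, ⟨htS, mem_doubleCoset.mpr ⟨(h * a * k * t⁻¹)⁻¹ * h, ?_, k, hk, ?_⟩⟩, _, htx, ?_⟩
    · exact H.mul_mem (H.inv_mem htx) hh
    · group
    · group
  · rintro ⟨t, ⟨-, ht⟩, h, hh, rfl⟩
    obtain ⟨h', hh', k, hk, rfl⟩ := mem_doubleCoset.mp ht
    exact mem_doubleCoset.mpr ⟨h * h', H.mul_mem hh hh', k, hk, by group⟩

end DoubleCoset

namespace QuotientGroup

variable {G : Type*} [Group G]

theorem card_leftRel_class (H : Subgroup G) (x : G) : Nat.card {y // leftRel H y x} = Nat.card H :=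
  Nat.card_congr <| ((Equiv.inv G).trans (Equiv.mulRight x)).subtypeEquiv fun y => by
    rw [leftRel_apply]; rfl

theorem card_rightRel_class (H : Subgroup G) (x : G) :
    Nat.card {y // rightRel H y x} = Nat.card H :=
  Nat.card_congr <| ((Equiv.inv G).trans (Equiv.mulLeft x)).subtypeEquiv fun y => by
    rw [rightRel_apply]; rfl

end QuotientGroup

theorem Subgroup.exists_common_left_right_transversal {G : Type*} [Group G] [Finite G]
    (H K : Subgroup G) (hHK : Nat.card H = Nat.card K) :
    ∃ S : Finset G, (∀ x, ∃! t, t ∈ S ∧ t⁻¹ * x ∈ K) ∧ (∀ x, ∃! t, t ∈ S ∧ x * t⁻¹ ∈ H) := by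
  simpa only [leftRel_apply, rightRel_apply] using
    Setoid.exists_common_transversal (DoubleCoset.leftRel_le_setoid H K)
      (DoubleCoset.rightRel_le_setoid H K) (card_leftRel_class K)
      (fun x => hHK ▸ card_rightRel_class H x) fun _ _ => DoubleCoset.exists_leftRel_rightRel_of_setoid

/-- For a subgroup `H` of a finite group `G` there is a common system of representatives `S`
for the left cosets and the right cosets of `H` in `G`, compatible with the double coset
decomposition: each double coset is the union of the left cosets (resp. right cosets) of its
representatives in `S`. -/
theorem stmt_13 (G : Type) [Group G] [Fintype G] (H : Subgroup G) :
    ∃ S : Finset G,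
      (∀ x : G, ∃! s : G, s ∈ S ∧ s⁻¹ * x ∈ H) ∧
      (∀ x : G, ∃! s : G, s ∈ S ∧ x * s⁻¹ ∈ H) ∧
      (∀ s ∈ S,
        DoubleCoset.doubleCoset s (H : Set G) (H : Set G) =
          (⋃ t ∈ {t : G | t ∈ S ∧ t ∈ DoubleCoset.doubleCoset s (H : Set G) (H : Set G)},
            (fun h => t * h) '' (H : Set G)) ∧
        DoubleCoset.doubleCoset s (H : Set G) (H : Set G) =
          (⋃ t ∈ {t : G | t ∈ S ∧ t ∈ DoubleCoset.doubleCoset s (H : Set G) (H : Set G)},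
            (fun h => h * t) '' (H : Set G))) := by
  obtain ⟨S, hleft, hright⟩ := H.exists_common_left_right_transversal H rfl
  exact ⟨S, hleft, hright, fun s _ =>
    ⟨DoubleCoset.doubleCoset_eq_biUnion_leftCoset (fun x => (hleft x).exists) s,
      DoubleCoset.doubleCoset_eq_biUnion_rightCoset (fun x => (hright x).exists) s⟩⟩
end

section
/- Let G be a finite group, H ≤ G, and W a rational irreducible representation of G with associated complex irreducible representation V and character field K_V. Define F_{H,W} = ∑_i a_i F_i in the Hecke ring, where a_i = ∑_{h∈H} Tr_{K_V/Q}(χ_V(h g_{i1}⁻¹)) and F_i = (1/|H|)∑_{g∈Hg_{i1}H} g. Then f_{H,W} := p_H e_W satisfies f_{H,W} = (dim V / |G|) · F_{H,W}, and both lie in the Hecke algebra Q[H\G/H]. -/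
/-!
Left multiplication by `p_H` turns `e_W` into `(dim V / |G|) |H|⁻¹ ∑ₓ a(x) x` with
`a(x) = ∑_{h ∈ H} Tr χ(h x⁻¹)`, because `Tr ∘ χ` is a class function. The coefficient function `a`
is invariant under `H` on both sides: it is therefore constant on double cosets, which regroups the
sum over `G` as `∑ₜ aₜ Fₜ`, and the element `∑ₓ a(x) x` is absorbed by `p_H` on either side, which
places both elements in `p_H ℚ[G] p_H`.
-/

open MonoidAlgebra

theorem Finset.sum_sum_eq_sum_of_existsUnique {ι α M : Type*} [Fintype α] [AddCommMonoid M]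
    (T : Finset ι) (S : ι → Finset α) (hS : ∀ x, ∃! t, t ∈ T ∧ x ∈ S t) (f : α → M) :
    ∑ t ∈ T, ∑ x ∈ S t, f x = ∑ x, f x := by
  classical
  choose τ hτ huniq using hS
  rw [← Finset.sum_fiberwise_of_maps_to (g := τ) (fun x _ => (hτ x).1) f]
  refine Finset.sum_congr rfl fun t ht => Finset.sum_congr ?_ fun _ _ => rfl
  ext x
  simp only [Finset.mem_filter, Finset.mem_univ, true_and]
  exact ⟨fun hx => (huniq x t ⟨ht, hx⟩).symm, by rintro rfl; exact (hτ x).2⟩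

section GroupAlgebra

variable {k G : Type*} [CommSemiring k] [Group G] [Fintype G]

theorem MonoidAlgebra.of_mul_sum_smul_of (g : G) (f : G → k) :
    of k G g * ∑ x, f x • of k G x = ∑ x, f (g⁻¹ * x) • of k G x := by
  rw [Finset.mul_sum]
  refine Fintype.sum_equiv (Equiv.mulLeft g) _ _ fun x => ?_
  rw [mul_smul_comm, ← map_mul]
  simp

theorem MonoidAlgebra.sum_smul_of_mul_of (g : G) (f : G → k) :
    (∑ x, f x • of k G x) * of k G g = ∑ x, f (x * g⁻¹) • of k G x := by
  rw [Finset.sum_mul]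
  refine Fintype.sum_equiv (Equiv.mulRight g) _ _ fun x => ?_
  rw [smul_mul_assoc, ← map_mul]
  simp

theorem MonoidAlgebra.sum_of_subgroup_mul_sum_smul_of (H : Subgroup G) [Fintype H] (f : G → k) :
    (∑ h : H, of k G h) * ∑ x, f x • of k G x = ∑ x, (∑ h : H, f ((h : G)⁻¹ * x)) • of k G x := by
  simp only [Finset.sum_mul, of_mul_sum_smul_of, Finset.sum_smul]
  exact Finset.sum_comm

theorem MonoidAlgebra.sum_smul_of_mul_sum_of_subgroup (H : Subgroup G) [Fintype H] (f : G → k) :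
    (∑ x, f x • of k G x) * ∑ h : H, of k G h = ∑ x, (∑ h : H, f (x * (h : G)⁻¹)) • of k G x := by
  simp only [Finset.mul_sum, sum_smul_of_mul_of, Finset.sum_smul]
  exact Finset.sum_comm

end GroupAlgebra

section DoubleCoset

variable {G : Type*} [Group G] (H : Subgroup G)

theorem Subgroup.sum_mul_inv_mul_right [Fintype H] {M : Type*} [AddCommMonoid M] (φ : G → M)
    {h₀ : G} (h₀_mem : h₀ ∈ H) (x : G) :
    ∑ h : H, φ (h * (x * h₀)⁻¹) = ∑ h : H, φ (h * x⁻¹) := by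
  refine Fintype.sum_equiv (Equiv.mulRight ⟨h₀, h₀_mem⟩⁻¹) _ _ fun h => ?_
  simp [mul_assoc]

theorem Subgroup.sum_mul_inv_mul_left [Fintype H] {M : Type*} [AddCommMonoid M] {φ : G → M}
    (hφ : ∀ x y, φ (x * y) = φ (y * x)) {h₀ : G} (h₀_mem : h₀ ∈ H) (x : G) :
    ∑ h : H, φ (h * (h₀ * x)⁻¹) = ∑ h : H, φ (h * x⁻¹) := by
  refine Fintype.sum_equiv (Equiv.mulLeft ⟨h₀, h₀_mem⟩⁻¹) _ _ fun h => ?_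
  rw [mul_inv_rev, ← mul_assoc, hφ]
  simp [mul_assoc]

theorem DoubleCoset.apply_eq_of_mem_doubleCoset {α : Type*} {f : G → α}
    (hl : ∀ h ∈ H, ∀ x, f (h * x) = f x) (hr : ∀ h ∈ H, ∀ x, f (x * h) = f x) {t x : G}
    (hx : x ∈ DoubleCoset.doubleCoset t (H : Set G) (H : Set G)) : f x = f t := by
  obtain ⟨h₁, hh₁, h₂, hh₂, rfl⟩ := DoubleCoset.mem_doubleCoset.1 hx
  rw [hr _ hh₂, hl _ hh₁]

end DoubleCoset

section HeckeAlgebra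

variable {k G : Type*} [Field k] [Group G] [Fintype G] (H : Subgroup G) [Fintype H]

variable (k) in
noncomputable def MonoidAlgebra.subgroupAverage : MonoidAlgebra k G :=
  (Fintype.card H : k)⁻¹ • ∑ h : H, of k G h

theorem MonoidAlgebra.subgroupAverage_mul_of_forall_mul_left [CharZero k] (f : G → k)
    (hf : ∀ h ∈ H, ∀ x, f (h * x) = f x) :
    subgroupAverage k H * ∑ x, f x • of k G x = ∑ x, f x • of k G x := by
  have hH : (Fintype.card H : k) ≠ 0 := by exact_mod_cast Fintype.card_ne_zero
  rw [subgroupAverage, smul_mul_assoc, sum_of_subgroup_mul_sum_smul_of, Finset.smul_sum]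
  refine Finset.sum_congr rfl fun x _ => ?_
  simp only [fun (h : H) => hf _ (inv_mem h.2) x, Finset.sum_const, Finset.card_univ, smul_smul,
    nsmul_eq_mul, inv_mul_cancel_left₀ hH]

theorem MonoidAlgebra.mul_subgroupAverage_of_forall_mul_right [CharZero k] (f : G → k)
    (hf : ∀ h ∈ H, ∀ x, f (x * h) = f x) :
    (∑ x, f x • of k G x) * subgroupAverage k H = ∑ x, f x • of k G x := by
  have hH : (Fintype.card H : k) ≠ 0 := by exact_mod_cast Fintype.card_ne_zero
  rw [subgroupAverage, mul_smul_comm, sum_smul_of_mul_sum_of_subgroup, Finset.smul_sum]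
  refine Finset.sum_congr rfl fun x _ => ?_
  simp only [fun (h : H) => hf _ (inv_mem h.2) x, Finset.sum_const, Finset.card_univ, smul_smul,
    nsmul_eq_mul, inv_mul_cancel_left₀ hH]

theorem MonoidAlgebra.subgroupAverage_mul_sum_inv_smul_of {φ : G → k}
    (hφ : ∀ x y, φ (x * y) = φ (y * x)) :
    subgroupAverage k H * ∑ g, φ g⁻¹ • of k G g
      = (Fintype.card H : k)⁻¹ • ∑ x, (∑ h : H, φ (h * x⁻¹)) • of k G x := by
  rw [subgroupAverage, smul_mul_assoc, sum_of_subgroup_mul_sum_smul_of]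
  congr 1
  refine Finset.sum_congr rfl fun x _ => congrArg (· • _) (Finset.sum_congr rfl fun h _ => ?_)
  rw [mul_inv_rev, inv_inv, hφ]

theorem MonoidAlgebra.sum_smul_sum_doubleCoset {f : G → k}
    (hl : ∀ h ∈ H, ∀ x, f (h * x) = f x) (hr : ∀ h ∈ H, ∀ x, f (x * h) = f x) (T : Finset G)
    (hT : ∀ x : G, ∃! t : G, t ∈ T ∧ x ∈ DoubleCoset.doubleCoset t (H : Set G) (H : Set G)) :
    ∑ t ∈ T, f t • ((Fintype.card H : k)⁻¹ •
      ∑ x ∈ (Set.toFinite (DoubleCoset.doubleCoset t (H : Set G) (H : Set G))).toFinset, of k G x)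
      = (Fintype.card H : k)⁻¹ • ∑ x, f x • of k G x := by
  rw [← Finset.sum_sum_eq_sum_of_existsUnique T
    (fun t => (Set.toFinite (DoubleCoset.doubleCoset t (H : Set G) (H : Set G))).toFinset)
    (by simpa using hT), Finset.smul_sum]
  refine Finset.sum_congr rfl fun t _ => ?_
  rw [smul_comm, Finset.smul_sum]
  congr 1
  refine Finset.sum_congr rfl fun x hx => ?_
  rw [DoubleCoset.apply_eq_of_mem_doubleCoset H hl hr ((Set.Finite.mem_toFinset _).1 hx)]

end HeckeAlgebra

theorem stmt_15_general (G : Type) [Group G] [Fintype G] (H : Subgroup G) [DecidablePred (· ∈ H)]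
    (V : Type) [AddCommGroup V] [Module ℂ V]
    (ρ : Representation ℂ G V)
    (χ : G → ℂ) (hχ : ∀ g, χ g = LinearMap.trace ℂ V (ρ g))
    (K : IntermediateField ℚ ℂ)
    (hmem : ∀ g, χ g ∈ K)
    (p : MonoidAlgebra ℚ G)
    (hp : p = (Fintype.card H : ℚ)⁻¹ • ∑ h : H, MonoidAlgebra.of ℚ G (h : G))
    (eW : MonoidAlgebra ℚ G)
    (heW : eW = ((Module.finrank ℂ V : ℚ) / (Fintype.card G : ℚ)) •
      ∑ g : G, (Algebra.trace ℚ K ⟨χ g⁻¹, hmem g⁻¹⟩) • MonoidAlgebra.of ℚ G g)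
    (a : G → ℚ)
    (ha : ∀ g : G, a g = ∑ h : H, Algebra.trace ℚ K ⟨χ ((h : G) * g⁻¹), hmem _⟩)
    (F : G → MonoidAlgebra ℚ G)
    (hF : ∀ g : G, F g = (Fintype.card H : ℚ)⁻¹ •
      ∑ x ∈ (Set.toFinite (DoubleCoset.doubleCoset g (H : Set G) (H : Set G))).toFinset,
        MonoidAlgebra.of ℚ G x)
    (T : Finset G)
    (hT : ∀ x : G, ∃! t : G, t ∈ T ∧ x ∈ DoubleCoset.doubleCoset t (H : Set G) (H : Set G)) :
    p * eW = ((Module.finrank ℂ V : ℚ) / (Fintype.card G : ℚ)) • ∑ t ∈ T, a t • F t ∧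
    p * (p * eW) * p = p * eW ∧
    p * (∑ t ∈ T, a t • F t) * p = ∑ t ∈ T, a t • F t := by
  obtain rfl : p = subgroupAverage ℚ H := hp
  let φ (g : G) : ℚ := Algebra.trace ℚ K ⟨χ g, hmem g⟩
  have hφ : ∀ x y, φ (x * y) = φ (y * x) := fun x y => by
    have hχ_comm : χ (x * y) = χ (y * x) := by rw [hχ, hχ]; exact ρ.char_mul_comm y x
    exact congrArg (Algebra.trace ℚ K) (Subtype.ext hχ_comm)
  have ha' : ∀ g, a g = ∑ h : H, φ (h * g⁻¹) := ha
  have ha_left : ∀ h ∈ H, ∀ x, a (h * x) = a x := fun h hh x => by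
    rw [ha', ha']; exact H.sum_mul_inv_mul_left hφ hh x
  have ha_right : ∀ h ∈ H, ∀ x, a (x * h) = a x := fun h hh x => by
    rw [ha', ha']; exact H.sum_mul_inv_mul_right φ hh x
  have hpY := subgroupAverage_mul_of_forall_mul_left H a ha_left
  have hYp := mul_subgroupAverage_of_forall_mul_right H a ha_right
  have hpeW : subgroupAverage ℚ H * eW = ((Module.finrank ℂ V : ℚ) / (Fintype.card G : ℚ)) •
      (Fintype.card H : ℚ)⁻¹ • ∑ x, a x • of ℚ G x := by
    rw [heW, mul_smul_comm]
    refine congrArg _ ((subgroupAverage_mul_sum_inv_smul_of H hφ).trans ?_)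
    simp only [ha']
  have hF_sum : ∑ t ∈ T, a t • F t = (Fintype.card H : ℚ)⁻¹ • ∑ x, a x • of ℚ G x := by
    simp only [hF]; exact sum_smul_sum_doubleCoset H ha_left ha_right T hT
  refine ⟨by rw [hpeW, hF_sum], ?_, ?_⟩
  · rw [hpeW]; simp only [mul_smul_comm, smul_mul_assoc, hpY, hYp]
  · rw [hF_sum]; simp only [mul_smul_comm, smul_mul_assoc, hpY, hYp]

/-- With `a_t = ∑_{h∈H} Tr_{K_V/ℚ}(χ_V(h t⁻¹))` and `F_t = (1/|H|) ∑_{x∈HtH} x`, the element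
`f_{H,W} = p_H e_W` satisfies `f_{H,W} = (dim V/|G|) · F_{H,W}` where
`F_{H,W} = ∑_t a_t F_t` over double-coset representatives, and both lie in the Hecke algebra
`ℚ[H\G/H] = p_H ℚ[G] p_H`. -/
theorem stmt_15 (G : Type) [Group G] [Fintype G] (H : Subgroup G) [DecidablePred (· ∈ H)]
    (V : Type) [AddCommGroup V] [Module ℂ V] [FiniteDimensional ℂ V]
    (ρ : Representation ℂ G V)
    (hirr : ∀ U : Submodule ℂ V, (∀ g : G, ∀ x ∈ U, ρ g x ∈ U) → U = ⊥ ∨ U = ⊤)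
    (hV : Nontrivial V)
    (χ : G → ℂ) (hχ : ∀ g, χ g = LinearMap.trace ℂ V (ρ g))
    (K : IntermediateField ℚ ℂ)
    (hK : K = IntermediateField.adjoin ℚ (Set.range χ))
    (hmem : ∀ g, χ g ∈ K)
    (p : MonoidAlgebra ℚ G)
    (hp : p = (Fintype.card H : ℚ)⁻¹ • ∑ h : H, MonoidAlgebra.of ℚ G (h : G))
    (eW : MonoidAlgebra ℚ G)
    (heW : eW = ((Module.finrank ℂ V : ℚ) / (Fintype.card G : ℚ)) •
      ∑ g : G, (Algebra.trace ℚ K ⟨χ g⁻¹, hmem g⁻¹⟩) • MonoidAlgebra.of ℚ G g)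
    (a : G → ℚ)
    (ha : ∀ g : G, a g = ∑ h : H, Algebra.trace ℚ K ⟨χ ((h : G) * g⁻¹), hmem _⟩)
    (F : G → MonoidAlgebra ℚ G)
    (hF : ∀ g : G, F g = (Fintype.card H : ℚ)⁻¹ •
      ∑ x ∈ (Set.toFinite (DoubleCoset.doubleCoset g (H : Set G) (H : Set G))).toFinset,
        MonoidAlgebra.of ℚ G x)
    (T : Finset G)
    (hT : ∀ x : G, ∃! t : G, t ∈ T ∧ x ∈ DoubleCoset.doubleCoset t (H : Set G) (H : Set G)) :
    p * eW = ((Module.finrank ℂ V : ℚ) / (Fintype.card G : ℚ)) • ∑ t ∈ T, a t • F t ∧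
    p * (p * eW) * p = p * eW ∧
    p * (∑ t ∈ T, a t • F t) * p = ∑ t ∈ T, a t • F t :=
  stmt_15_general G H V ρ χ hχ K hmem p hp eW heW a ha F hF T hT
end

section
/- Let G be a finite group, H ≤ G, V a complex irreducible representation with dim V^H = 1 and Schur index 1 over K = K_V, and W the rational form of ⊕_{φ∈Gal(K/Q)} V^φ as above. Define S(w₁,w₂) = Tr_{K/Q}(v₁,v₂) for wᵢ = (vᵢ, vᵢ^{φ₂},…), where (·,·) is a G-invariant K-valued Hermitian product on V_K with (v,v) ∈ Q_{>0} for a fixed 0 ≠ v ∈ V_K^H. Then S is a G-invariant positive definite symmetric Q-bilinear form on W, and for w = (v, v^{φ₂}, …) and any g ∈ G: S(w, g·w) = ((v,v)/|H|)·∑_{h∈H} Tr_{K/Q}(χ_V(h g⁻¹)). -/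
/-!
Positivity: for the fixed vector `v`, the operator `x ↦ ∑_g (gv, x) gv` commutes with `G`, so by
Schur it is a scalar `c`, and pairing with `x` gives `c (x, x) = ∑_g σ(x, gv) (x, gv)`. Every
complex embedding of `K` turns `σ` into complex conjugation (`σ` is central in `Gal(K/ℚ)`), so
this reads `c (x, x) = ∑_g |(x, gv)|²` in each conjugate. At `x = v`, where `(v, v) = q > 0`, every
conjugate of `c` is a positive real; hence every conjugate of `(u, u)` is positive for `u ≠ 0`,
and so is `Tr_{K/ℚ} (u, u)`.

Character formula: `∑_{h ∈ H} h` maps `V` onto the line `V^H = K v`, explicitly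
`x ↦ |H| (v, x) / (v, v) • v`, so `∑_{h ∈ H} h g⁻¹` has rank one and trace `|H| (gv, v) / (v, v)`.
-/

open Module ComplexConjugate

section OrbitOperator

variable {K V G : Type*} [Field K] [AddCommGroup V] [Module K V] [Group G] [Fintype G]
  (ρ : Representation K G V) (B : V → V →ₗ[K] K)

def orbitOperator (v : V) : V →ₗ[K] V := ∑ g, (B (ρ g v)).smulRight (ρ g v)

variable {ρ B}

lemma orbitOperator_apply (v x : V) :
    orbitOperator ρ B v x = ∑ g, B (ρ g v) x • ρ g v := by
  simp [orbitOperator]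

lemma orbitOperator_comp (hB : ∀ g x y, B (ρ g x) (ρ g y) = B x y) (v : V) (h : G) :
    orbitOperator ρ B v ∘ₗ ρ h = ρ h ∘ₗ orbitOperator ρ B v := by
  ext x
  simp only [LinearMap.comp_apply, orbitOperator_apply, map_sum, map_smul]
  refine Fintype.sum_equiv (Equiv.mulLeft h⁻¹) _ _ fun g => ?_
  have hg : ρ h (ρ (h⁻¹ * g) v) = ρ g v := by
    rw [← Module.End.mul_apply, ← map_mul, mul_inv_cancel_left]
  change _ = B (ρ (h⁻¹ * g) v) x • ρ h (ρ (h⁻¹ * g) v)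
  rw [← hB h (ρ (h⁻¹ * g) v) x, hg]

lemma apply_orbitOperator_self {σ : K →+* K} (hBσ : ∀ x y, B y x = σ (B x y)) (v x : V) :
    B x (orbitOperator ρ B v x) = ∑ g, σ (B x (ρ g v)) * B x (ρ g v) := by
  simp only [orbitOperator_apply, map_sum, map_smul, smul_eq_mul]
  exact Finset.sum_congr rfl fun g _ => by rw [hBσ]

variable {σ : K →+* K} {e : K →+* ℂ} {v : V} {c : K}

lemma map_mul_map_apply_self (hBσ : ∀ x y, B y x = σ (B x y))
    (he : ∀ x, e (σ x) = conj (e x)) (hc : orbitOperator ρ B v = c • LinearMap.id) (x : V) :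
    e c * e (B x x) = ((∑ g, Complex.normSq (e (B x (ρ g v))) : ℝ) : ℂ) := by
  have hx : B x (orbitOperator ρ B v x) = c * B x x := by simp [hc]
  rw [← map_mul, ← hx, apply_orbitOperator_self hBσ, map_sum]
  push_cast
  simp only [map_mul, he, Complex.normSq_eq_conj_mul_self]

lemma exists_map_eq_ofReal_pos (hBσ : ∀ x y, B y x = σ (B x y))
    (he : ∀ x, e (σ x) = conj (e x)) (hc : orbitOperator ρ B v = c • LinearMap.id)
    {q : ℝ} (hq : 0 < q) (hvv : e (B v v) = q) :
    ∃ r : ℝ, 0 < r ∧ e c = r := by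
  set s := ∑ g, Complex.normSq (e (B v (ρ g v)))
  have hs : q ^ 2 ≤ s := by
    calc q ^ 2 = Complex.normSq (e (B v (ρ 1 v))) := by simp [hvv, sq]
      _ ≤ s := Finset.single_le_sum (f := fun g => Complex.normSq (e (B v (ρ g v))))
          (fun g _ => Complex.normSq_nonneg _) (Finset.mem_univ 1)
  refine ⟨s / q, div_pos ((pow_pos hq 2).trans_le hs) hq, ?_⟩
  have h := map_mul_map_apply_self hBσ he hc v
  rw [hvv] at h
  push_cast
  rw [eq_div_iff (by exact_mod_cast hq.ne'), h]

lemma re_map_apply_self_pos (hBσ : ∀ x y, B y x = σ (B x y))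
    (he : ∀ x, e (σ x) = conj (e x)) (hc : orbitOperator ρ B v = c • LinearMap.id)
    {q : ℝ} (hq : 0 < q) (hvv : e (B v v) = q) {u : V} (hu : u ≠ 0) :
    0 < (e (B u u)).re := by
  obtain ⟨r, hr, hcr⟩ := exists_map_eq_ofReal_pos hBσ he hc hq hvv
  obtain ⟨g, hg⟩ : ∃ g, B u (ρ g v) ≠ 0 := by
    by_contra! h
    have hcu : c • u = 0 := by
      have hu := LinearMap.congr_fun hc u
      simp only [orbitOperator_apply, hBσ u, h, map_zero, zero_smul, Finset.sum_const_zero,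
        LinearMap.smul_apply, LinearMap.id_apply] at hu
      exact hu.symm
    have hc0 : c ≠ 0 := by
      rintro rfl
      rw [map_zero] at hcr
      exact hr.ne (by exact_mod_cast hcr)
    exact hu ((smul_eq_zero.mp hcu).resolve_left hc0)
  set s := ∑ g, Complex.normSq (e (B u (ρ g v)))
  have hs : 0 < s := Finset.sum_pos' (fun g _ => Complex.normSq_nonneg _)
    ⟨g, Finset.mem_univ g, Complex.normSq_pos.mpr ((map_ne_zero e).mpr hg)⟩
  have h := map_mul_map_apply_self hBσ he hc u
  have hu : e (B u u) = ((s / r : ℝ) : ℂ) := by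
    rw [Complex.ofReal_div, eq_div_iff (by exact_mod_cast hr.ne'), mul_comm, ← hcr, h]
  rw [hu, Complex.ofReal_re]
  positivity

end OrbitOperator

section SubgroupAverage

variable {K V G : Type*} [Field K] [AddCommGroup V] [Module K V] [Group G]
  {ρ : Representation K G V} {B : V → V →ₗ[K] K} {H : Subgroup G} [Fintype H] {v : V}

lemma sum_subgroup_apply_eq_smul (hB : ∀ g x y, B (ρ g x) (ρ g y) = B x y)
    (hfix : finrank K ↥(⨅ h : H, LinearMap.eqLocus (ρ (h : G)) LinearMap.id) = 1)
    (hv0 : v ≠ 0) (hvH : ∀ h ∈ H, ρ h v = v) (hvv : B v v ≠ 0) (x : V) :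
    ∑ h : H, ρ h x = ((Fintype.card H : K) * B v x / B v v) • v := by
  set N := ⨅ h : H, LinearMap.eqLocus (ρ (h : G)) LinearMap.id
  have hvN : v ∈ N := Submodule.mem_iInf _ |>.mpr fun h => hvH h h.2
  have hsumN : ∑ h : H, ρ h x ∈ N := by
    refine Submodule.mem_iInf _ |>.mpr fun k => ?_
    rw [LinearMap.mem_eqLocus, LinearMap.id_apply, map_sum]
    refine Fintype.sum_equiv (Equiv.mulLeft k) _ _ fun h => ?_
    simp [← Module.End.mul_apply, ← map_mul]
  obtain ⟨a, ha⟩ := (finrank_eq_one_iff_of_nonzero' (⟨v, hvN⟩ : N) (by simpa using hv0)).mp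
    hfix ⟨_, hsumN⟩
  have hsum : ∑ h : H, ρ h x = a • v := congrArg Subtype.val ha.symm
  have hBsum : B v (∑ h : H, ρ h x) = Fintype.card H * B v x := by
    rw [map_sum, Finset.sum_congr rfl fun h _ => by simpa [hvH h h.2] using hB h v x]
    simp
  rw [hsum, map_smul, smul_eq_mul] at hBsum
  rw [hsum, ← hBsum, mul_div_cancel_right₀ _ hvv]

lemma sum_trace_mul_inv_eq [FiniteDimensional K V] (hB : ∀ g x y, B (ρ g x) (ρ g y) = B x y)
    (hfix : finrank K ↥(⨅ h : H, LinearMap.eqLocus (ρ (h : G)) LinearMap.id) = 1)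
    (hv0 : v ≠ 0) (hvH : ∀ h ∈ H, ρ h v = v) (hvv : B v v ≠ 0) (g : G) :
    ∑ h : H, LinearMap.trace K V (ρ (h * g⁻¹)) = Fintype.card H * B (ρ g v) v / B v v := by
  have hsum : ∑ h : H, ρ (h * g⁻¹) =
      (((Fintype.card H : K) / B v v) • (B v ∘ₗ ρ g⁻¹)).smulRight v := by
    ext x
    simp only [map_mul, LinearMap.sum_apply, Module.End.mul_apply,
      sum_subgroup_apply_eq_smul hB hfix hv0 hvH hvv, LinearMap.smulRight_apply,
      LinearMap.smul_apply, LinearMap.comp_apply, smul_eq_mul, div_mul_eq_mul_div]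
  have hinv : B v (ρ g⁻¹ v) = B (ρ g v) v := by
    rw [← hB g, ← Module.End.mul_apply, ← map_mul, mul_inv_cancel, map_one, Module.End.one_apply]
  rw [← map_sum, hsum, LinearMap.trace_smulRight, LinearMap.smul_apply, LinearMap.comp_apply,
    hinv, smul_eq_mul]
  ring

end SubgroupAverage

lemma trace_pos_of_forall_re_pos {K : IntermediateField ℚ ℂ} [FiniteDimensional ℚ K]
    [IsGalois ℚ K] {x : K} (hx : ∀ φ : K ≃ₐ[ℚ] K, 0 < ((φ x : K) : ℂ).re) :
    0 < Algebra.trace ℚ K x := by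
  have h : ((Algebra.trace ℚ K x : ℚ) : ℂ) = ∑ φ : K ≃ₐ[ℚ] K, ((φ x : K) : ℂ) := by
    rw [← eq_ratCast (algebraMap ℚ ℂ), IsScalarTower.algebraMap_apply ℚ K ℂ,
      trace_eq_sum_automorphisms, map_sum]
    rfl
  have hre := congrArg Complex.re h
  rw [Complex.ratCast_re, Complex.re_sum] at hre
  exact_mod_cast hre ▸ Finset.sum_pos (fun φ _ => hx φ) Finset.univ_nonempty

lemma trace_apply_self_pos {K : IntermediateField ℚ ℂ} [FiniteDimensional ℚ K] [IsGalois ℚ K]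
    {σ : K ≃ₐ[ℚ] K} (hσ : ∀ x : K, ((σ x : K) : ℂ) = conj (x : ℂ))
    (hσcomm : ∀ φ : K ≃ₐ[ℚ] K, φ * σ = σ * φ)
    {V G : Type*} [AddCommGroup V] [Module K V] [Group G] [Fintype G]
    {ρ : Representation K G V} {B : V → V →ₗ[K] K} (hBσ : ∀ x y, B y x = (σ : K →+* K) (B x y))
    {v : V} {c : K} (hc : orbitOperator ρ B v = c • LinearMap.id)
    {q : ℚ} (hq : 0 < q) (hvv : B v v = algebraMap ℚ K q) {u : V} (hu : u ≠ 0) :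
    0 < Algebra.trace ℚ K (B u u) := by
  refine trace_pos_of_forall_re_pos fun φ => ?_
  refine re_map_apply_self_pos (e := (algebraMap K ℂ).comp φ) hBσ (fun x => ?_) hc
    (q := q) (by exact_mod_cast hq) ?_ hu
  · change ((φ (σ x) : K) : ℂ) = conj ((φ x : K) : ℂ)
    rw [← AlgEquiv.mul_apply, hσcomm, AlgEquiv.mul_apply, hσ]
  · change ((φ (B v v) : K) : ℂ) = _
    simp [hvv]

theorem stmt_18_general (G : Type) [Group G] [Fintype G] (H : Subgroup G) [DecidablePred (· ∈ H)]
    (K : IntermediateField ℚ ℂ) [FiniteDimensional ℚ ↥K] [IsGalois ℚ ↥K]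
    (habelian : ∀ φ ψ : ↥K ≃ₐ[ℚ] ↥K, φ * ψ = ψ * φ)
    (n : ℕ) (ρ : Representation ↥K G (Fin n → ↥K))
    (hSchur : ∀ f : (Fin n → ↥K) →ₗ[↥K] (Fin n → ↥K),
      (∀ g : G, f ∘ₗ (ρ g) = (ρ g) ∘ₗ f) → ∃ c : ↥K, f = c • LinearMap.id)
    (σ : ↥K ≃ₐ[ℚ] ↥K) (hσ : ∀ x : ↥K, ((σ x : ↥K) : ℂ) = starRingEnd ℂ (x : ℂ))
    (B : (Fin n → ↥K) → (Fin n → ↥K) → ↥K)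
    (hBadd : ∀ x y z, B x (y + z) = B x y + B x z)
    (hBsmul : ∀ (c : ↥K) (x y), B x (c • y) = c * B x y)
    (hBherm : ∀ x y, B y x = σ (B x y))
    (hBinv : ∀ (g : G) (x y), B (ρ g x) (ρ g y) = B x y)
    (hfix : Module.finrank ↥K
      ↥(⨅ h : H, LinearMap.eqLocus (ρ (h : G)) (LinearMap.id : (Fin n → ↥K) →ₗ[↥K] (Fin n → ↥K))) = 1)
    (v : Fin n → ↥K) (hv0 : v ≠ 0) (hvH : ∀ h : G, h ∈ H → ρ h v = v)
    (q : ℚ) (hq : 0 < q) (hBvv : B v v = algebraMap ℚ ↥K q)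
    (Θ : G → (((↥K ≃ₐ[ℚ] ↥K) → Fin n → ↥K) → ((↥K ≃ₐ[ℚ] ↥K) → Fin n → ↥K)))
    (hΘ : ∀ (g : G) (f : (↥K ≃ₐ[ℚ] ↥K) → Fin n → ↥K) (φ : ↥K ≃ₐ[ℚ] ↥K) (i : Fin n),
      Θ g f φ i = φ ((ρ g) (fun j => φ.symm (f φ j)) i))
    (D : Set ((↥K ≃ₐ[ℚ] ↥K) → Fin n → ↥K))
    (hD : D = {f | ∃ u : Fin n → ↥K, ∀ (φ : ↥K ≃ₐ[ℚ] ↥K) (i : Fin n), f φ i = φ (u i)})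
    (S : ((↥K ≃ₐ[ℚ] ↥K) → Fin n → ↥K) → ((↥K ≃ₐ[ℚ] ↥K) → Fin n → ↥K) → ℚ)
    (hS : ∀ f₁ f₂, S f₁ f₂ = Algebra.trace ℚ ↥K (B (f₁ 1) (f₂ 1)))
    (w : (↥K ≃ₐ[ℚ] ↥K) → Fin n → ↥K)
    (hw : ∀ (φ : ↥K ≃ₐ[ℚ] ↥K) (i : Fin n), w φ i = φ (v i)) :
    (∀ f₁ f₂, f₁ ∈ D → f₂ ∈ D → S f₁ f₂ = S f₂ f₁) ∧
    (∀ f₁ f₂ f₃, S f₁ (f₂ + f₃) = S f₁ f₂ + S f₁ f₃) ∧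
    (∀ f₁ f₂ f₃, S (f₁ + f₂) f₃ = S f₁ f₃ + S f₂ f₃) ∧
    (∀ (c : ℚ) (f₁ f₂), S f₁ (c • f₂) = c * S f₁ f₂) ∧
    (∀ (g : G) (f₁ f₂), f₁ ∈ D → f₂ ∈ D → S (Θ g f₁) (Θ g f₂) = S f₁ f₂) ∧
    (∀ f, f ∈ D → f ≠ 0 → 0 < S f f) ∧
    (∀ g : G, S w (Θ g w) = (q / (Fintype.card H : ℚ)) *
      ∑ h : H, Algebra.trace ℚ ↥K
        (LinearMap.trace ↥K (Fin n → ↥K) (ρ ((h : G) * g⁻¹)))) := by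
  let Bₗ : (Fin n → K) → (Fin n → K) →ₗ[K] K := fun x =>
    { toFun := B x, map_add' := hBadd x, map_smul' := fun c y => hBsmul c x y }
  have hBσ : ∀ x y, Bₗ y x = (σ : K →+* K) (Bₗ x y) := hBherm
  have hBaddl : ∀ x y z, B (x + y) z = B x z + B y z := fun x y z => by
    rw [hBherm, hBadd, map_add, ← hBherm, ← hBherm]
  have hΘ1 : ∀ g f, Θ g f 1 = ρ g (f 1) := fun g f => funext (hΘ g f 1)
  have hw1 : w 1 = v := funext (hw 1)
  have htrσ : ∀ x, Algebra.trace ℚ K (σ x) = Algebra.trace ℚ K x :=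
    Algebra.trace_eq_of_algEquiv σ
  have hvv : Bₗ v v ≠ 0 := by simp [Bₗ, hBvv, hq.ne']
  refine ⟨fun f₁ f₂ _ _ => by rw [hS, hS, hBherm, htrσ],
    fun f₁ f₂ f₃ => by rw [hS, hS, hS, Pi.add_apply, hBadd, map_add],
    fun f₁ f₂ f₃ => by rw [hS, hS, hS, Pi.add_apply, hBaddl, map_add],
    fun c f₁ f₂ => ?_, fun g f₁ f₂ _ _ => by rw [hS, hS, hΘ1, hΘ1, hBinv],
    fun f hf hf0 => ?_, fun g => ?_⟩
  · rw [hS, hS, Pi.smul_apply, ← algebraMap_smul K c, hBsmul, ← Algebra.smul_def, map_smul,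
      smul_eq_mul]
  · obtain ⟨u, hu⟩ := hD ▸ hf
    have hu0 : u ≠ 0 := by
      rintro rfl
      exact hf0 (funext fun φ => funext fun i => by simp [hu])
    obtain ⟨c, hc⟩ := hSchur (orbitOperator ρ Bₗ v) (orbitOperator_comp hBinv v)
    rw [hS, show f 1 = u from funext (hu 1)]
    exact trace_apply_self_pos hσ (habelian · σ) hBσ hc hq hBvv hu0
  · rw [hS, hΘ1, hw1, ← map_sum, sum_trace_mul_inv_eq (B := Bₗ) hBinv hfix hv0 hvH hvv g]
    have hcoef : (Fintype.card H : K) * Bₗ (ρ g v) v / Bₗ v v =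
        algebraMap ℚ K (Fintype.card H / q) * σ (B v (ρ g v)) := by
      rw [← hBherm v (ρ g v)]
      simp only [Bₗ, LinearMap.coe_mk, AddHom.coe_mk, hBvv, map_div₀, map_natCast]
      ring
    have hcard : (Fintype.card H : ℚ) ≠ 0 := by exact_mod_cast Fintype.card_ne_zero
    rw [hcoef, ← Algebra.smul_def, map_smul, htrσ, smul_eq_mul]
    field_simp

/-- Let `K ⊂ ℂ` be the (abelian) character field of an absolutely irreducible `K`-form `ρ` of
a complex irreducible representation `V` with `dim V^H = 1`, let `B` be a `G`-invariant
`K`-valued Hermitian product (with respect to the restriction `σ` of complex conjugation) on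
`V_K = K^n` such that `B(v,v) = q ∈ ℚ_{>0}` for a fixed nonzero `H`-fixed vector `v`, and let
`W` be the Galois-diagonal set with `G`-action `Θ` and `S(w₁,w₂) = Tr_{K/ℚ}(B(v₁,v₂))`.
Then `S` is a `G`-invariant positive definite symmetric `ℚ`-bilinear form on `W`, and for
`w = (φ(v_i))_φ` and any `g ∈ G`:
`S(w, g·w) = ((v,v)/|H|) · ∑_{h∈H} Tr_{K/ℚ}(χ_V(h g⁻¹))`. -/
theorem stmt_18 (G : Type) [Group G] [Fintype G] (H : Subgroup G) [DecidablePred (· ∈ H)]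
    (K : IntermediateField ℚ ℂ) [FiniteDimensional ℚ ↥K] [IsGalois ℚ ↥K]
    (habelian : ∀ φ ψ : ↥K ≃ₐ[ℚ] ↥K, φ * ψ = ψ * φ)
    (n : ℕ) (ρ : Representation ↥K G (Fin n → ↥K))
    (hSchur : ∀ f : (Fin n → ↥K) →ₗ[↥K] (Fin n → ↥K),
      (∀ g : G, f ∘ₗ (ρ g) = (ρ g) ∘ₗ f) → ∃ c : ↥K, f = c • LinearMap.id)
    (σ : ↥K ≃ₐ[ℚ] ↥K) (hσ : ∀ x : ↥K, ((σ x : ↥K) : ℂ) = starRingEnd ℂ (x : ℂ))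
    (B : (Fin n → ↥K) → (Fin n → ↥K) → ↥K)
    (hBadd : ∀ x y z, B x (y + z) = B x y + B x z)
    (hBsmul : ∀ (c : ↥K) (x y), B x (c • y) = c * B x y)
    (hBherm : ∀ x y, B y x = σ (B x y))
    (hBpos : ∀ x, x ≠ 0 → 0 < ((B x x : ↥K) : ℂ).re)
    (hBinv : ∀ (g : G) (x y), B (ρ g x) (ρ g y) = B x y)
    (hfix : Module.finrank ↥K
      ↥(⨅ h : H, LinearMap.eqLocus (ρ (h : G)) (LinearMap.id : (Fin n → ↥K) →ₗ[↥K] (Fin n → ↥K))) = 1)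
    (v : Fin n → ↥K) (hv0 : v ≠ 0) (hvH : ∀ h : G, h ∈ H → ρ h v = v)
    (q : ℚ) (hq : 0 < q) (hBvv : B v v = algebraMap ℚ ↥K q)
    (Θ : G → (((↥K ≃ₐ[ℚ] ↥K) → Fin n → ↥K) → ((↥K ≃ₐ[ℚ] ↥K) → Fin n → ↥K)))
    (hΘ : ∀ (g : G) (f : (↥K ≃ₐ[ℚ] ↥K) → Fin n → ↥K) (φ : ↥K ≃ₐ[ℚ] ↥K) (i : Fin n),
      Θ g f φ i = φ ((ρ g) (fun j => φ.symm (f φ j)) i))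
    (D : Set ((↥K ≃ₐ[ℚ] ↥K) → Fin n → ↥K))
    (hD : D = {f | ∃ u : Fin n → ↥K, ∀ (φ : ↥K ≃ₐ[ℚ] ↥K) (i : Fin n), f φ i = φ (u i)})
    (S : ((↥K ≃ₐ[ℚ] ↥K) → Fin n → ↥K) → ((↥K ≃ₐ[ℚ] ↥K) → Fin n → ↥K) → ℚ)
    (hS : ∀ f₁ f₂, S f₁ f₂ = Algebra.trace ℚ ↥K (B (f₁ 1) (f₂ 1)))
    (w : (↥K ≃ₐ[ℚ] ↥K) → Fin n → ↥K)
    (hw : ∀ (φ : ↥K ≃ₐ[ℚ] ↥K) (i : Fin n), w φ i = φ (v i)) :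
    (∀ f₁ f₂, f₁ ∈ D → f₂ ∈ D → S f₁ f₂ = S f₂ f₁) ∧
    (∀ f₁ f₂ f₃, S f₁ (f₂ + f₃) = S f₁ f₂ + S f₁ f₃) ∧
    (∀ f₁ f₂ f₃, S (f₁ + f₂) f₃ = S f₁ f₃ + S f₂ f₃) ∧
    (∀ (c : ℚ) (f₁ f₂), S f₁ (c • f₂) = c * S f₁ f₂) ∧
    (∀ (g : G) (f₁ f₂), f₁ ∈ D → f₂ ∈ D → S (Θ g f₁) (Θ g f₂) = S f₁ f₂) ∧
    (∀ f, f ∈ D → f ≠ 0 → 0 < S f f) ∧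
    (∀ g : G, S w (Θ g w) = (q / (Fintype.card H : ℚ)) *
      ∑ h : H, Algebra.trace ℚ ↥K
        (LinearMap.trace ↥K (Fin n → ↥K) (ρ ((h : G) * g⁻¹)))) :=
  stmt_18_general G H K habelian n ρ hSchur σ hσ B hBadd hBsmul hBherm hBinv hfix v hv0 hvH q hq
    hBvv Θ hΘ D hD S hS w hw
end
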